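/- Suppose ℓ ∈ L_a, m ∈ L_b, and there exists t₀ ∈ (0,1) with ℓ ≤ m on [0,t₀] and ℓ ≥ m on [t₀,1]. Then 2∫₀¹ |ℓ - m| ≤ 2∫₀¹ |ℓ_a⁻ - ℓ_b⁺|. -/

import Mathlib

/-!
Since `ℓ - m` changes sign exactly once, at `t₀`, its `L¹` norm is
`∫₀¹ (ℓ - m) - 2 ∫₀^{t₀} (ℓ - m)`; for any other pair of functions, such as `ℓ_a⁻, ℓ_b⁺`, the same
expression is only a lower bound of the `L¹` distance. The totals agree, since
`∫₀¹ ℓ = ∫₀¹ ℓ_a⁻ = (1 - a)/2` and `∫₀¹ m = ∫₀¹ ℓ_b⁺ = (1 - b)/2`, so it remains to compare partial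
integrals: `∫₀^t ℓ_a⁻ ≤ ∫₀^t ℓ` and `∫₀^t m ≤ ∫₀^t ℓ_b⁺`. A convex curve crosses a line through
one of its endpoints at most once, so either the desired inequality holds pointwise on `[0, t]`,
or the reverse one holds pointwise on `[t, 1]`; as the total integrals agree, both cases give it.
-/

open Set

/-- Membership in `L`: convex `ℓ : [0,1] → [0,1]` with `ℓ 0 = 0`, `ℓ 1 = 1`. -/
def MemLorenz (ℓ : ℝ → ℝ) : Prop :=
  ConvexOn ℝ (Icc (0:ℝ) 1) ℓ ∧ (∀ t ∈ Icc (0:ℝ) 1, ℓ t ∈ Icc (0:ℝ) 1) ∧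
    ℓ 0 = 0 ∧ ℓ 1 = 1

/-- The Gini index `G(ℓ) = 1 - 2∫₀¹ ℓ`. -/
noncomputable def Gini (ℓ : ℝ → ℝ) : ℝ := 1 - 2 * ∫ t in (0:ℝ)..1, ℓ t

/-- `ℓ_a⁻(t) = max {0, (t-a)/(1-a)}`. -/
noncomputable def laMinus (a : ℝ) : ℝ → ℝ := fun t => max 0 ((t - a) / (1 - a))

/-- `ℓ_b⁺(t) = (1-b)t` on `[0,1)`, `ℓ_b⁺(1) = 1`. -/
noncomputable def lbPlus (b : ℝ) : ℝ → ℝ := fun t => if t = 1 then 1 else (1 - b) * t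

open MeasureTheory intervalIntegral

section OneSignSwitch

variable {f g : ℝ → ℝ} {a b c : ℝ}

theorem IntervalIntegrable.left_of_le (hf : IntervalIntegrable f volume a c)
    (hab : a ≤ b) (hbc : b ≤ c) : IntervalIntegrable f volume a b :=
  hf.mono_set (uIcc_subset_uIcc_left (by rw [uIcc_of_le (hab.trans hbc)]; exact ⟨hab, hbc⟩))

theorem IntervalIntegrable.right_of_le (hf : IntervalIntegrable f volume a c)
    (hab : a ≤ b) (hbc : b ≤ c) : IntervalIntegrable f volume b c :=
  hf.mono_set (uIcc_subset_uIcc_right (by rw [uIcc_of_le (hab.trans hbc)]; exact ⟨hab, hbc⟩))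

theorem integral_le_integral_of_le_or_le (hab : a ≤ b) (hbc : b ≤ c)
    (hf : IntervalIntegrable f volume a c) (hg : IntervalIntegrable g volume a c)
    (heq : ∫ x in a..c, f x = ∫ x in a..c, g x)
    (hfg : (∀ x ∈ Icc a b, f x ≤ g x) ∨ ∀ x ∈ Icc b c, g x ≤ f x) :
    ∫ x in a..b, f x ≤ ∫ x in a..b, g x := by
  rcases hfg with hle | hge
  · exact integral_mono_on hab (hf.left_of_le hab hbc) (hg.left_of_le hab hbc) hle
  · have := integral_mono_on hbc (hg.right_of_le hab hbc) (hf.right_of_le hab hbc) hge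
    rw [← integral_add_adjacent_intervals (hf.left_of_le hab hbc) (hf.right_of_le hab hbc),
      ← integral_add_adjacent_intervals (hg.left_of_le hab hbc) (hg.right_of_le hab hbc)] at heq
    linarith

theorem integral_sub_sub_two_mul_le_integral_abs_sub (hab : a ≤ b) (hbc : b ≤ c)
    (hf : IntervalIntegrable f volume a c) (hg : IntervalIntegrable g volume a c) :
    (∫ x in a..c, f x) - (∫ x in a..c, g x) - 2 * ((∫ x in a..b, f x) - ∫ x in a..b, g x) ≤
      ∫ x in a..c, |f x - g x| := by
  have hf₁ := hf.left_of_le hab hbc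
  have hf₂ := hf.right_of_le hab hbc
  have hg₁ := hg.left_of_le hab hbc
  have hg₂ := hg.right_of_le hab hbc
  have h₁ := integral_mono_on hab (hg₁.sub hf₁) (hf₁.sub hg₁).abs fun x _ =>
    (abs_sub_comm (f x) (g x)).symm ▸ le_abs_self (g x - f x)
  have h₂ := integral_mono_on hbc (hf₂.sub hg₂) (hf₂.sub hg₂).abs fun x _ =>
    le_abs_self (f x - g x)
  rw [integral_sub hg₁ hf₁] at h₁
  rw [integral_sub hf₂ hg₂] at h₂
  rw [← integral_add_adjacent_intervals hf₁ hf₂, ← integral_add_adjacent_intervals hg₁ hg₂,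
    ← integral_add_adjacent_intervals (hf₁.sub hg₁).abs (hf₂.sub hg₂).abs]
  linarith

theorem integral_abs_sub_eq_of_le_of_le (hab : a ≤ b) (hbc : b ≤ c)
    (hf : IntervalIntegrable f volume a c) (hg : IntervalIntegrable g volume a c)
    (hle : ∀ x ∈ Icc a b, f x ≤ g x) (hge : ∀ x ∈ Icc b c, g x ≤ f x) :
    ∫ x in a..c, |f x - g x| =
      (∫ x in a..c, f x) - (∫ x in a..c, g x) - 2 * ((∫ x in a..b, f x) - ∫ x in a..b, g x) := by
  have hf₁ := hf.left_of_le hab hbc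
  have hf₂ := hf.right_of_le hab hbc
  have hg₁ := hg.left_of_le hab hbc
  have hg₂ := hg.right_of_le hab hbc
  have h₁ : ∫ x in a..b, |f x - g x| = ∫ x in a..b, (g x - f x) := by
    refine integral_congr fun x hx => ?_
    rw [uIcc_of_le hab] at hx
    exact abs_of_nonpos (sub_nonpos.2 (hle x hx)) ▸ neg_sub (f x) (g x)
  have h₂ : ∫ x in b..c, |f x - g x| = ∫ x in b..c, (f x - g x) := by
    refine integral_congr fun x hx => ?_
    rw [uIcc_of_le hbc] at hx
    exact abs_of_nonneg (sub_nonneg.2 (hge x hx))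
  rw [← integral_add_adjacent_intervals (hf₁.sub hg₁).abs (hf₂.sub hg₂).abs, h₁, h₂,
    integral_sub hg₁ hf₁, integral_sub hf₂ hg₂, ← integral_add_adjacent_intervals hf₁ hf₂,
    ← integral_add_adjacent_intervals hg₁ hg₂]
  ring

end OneSignSwitch

-- `f - g` is convex and nonpositive at `x`; if it is positive at `z`, it keeps growing past `z`.
theorem ConvexOn.le_or_le_of_concaveOn {s : Set ℝ} {f g : ℝ → ℝ} (hf : ConvexOn ℝ s f)
    (hg : ConcaveOn ℝ s g) {x z : ℝ} (hx : x ∈ s) (hz : z ∈ s) (hfgx : f x ≤ g x) :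
    (∀ t ∈ uIcc x z, f t ≤ g t) ∨ ∀ t ∈ s, z ∈ uIcc x t → g t ≤ f t := by
  have h := hf.sub hg
  by_cases hfgz : f z ≤ g z
  · left
    intro t ht
    have := h.le_on_segment hx hz ((segment_eq_uIcc x z).symm ▸ ht)
    simp only [Pi.sub_apply] at this
    linarith [max_le (sub_nonpos.2 hfgx) (sub_nonpos.2 hfgz)]
  · right
    intro t ht hzt
    have := h.le_on_segment hx ht ((segment_eq_uIcc x t).symm ▸ hzt)
    simp only [Pi.sub_apply, le_max_iff] at this
    rcases this with h' | h' <;> linarith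

theorem concaveOn_sub_div (a c : ℝ) {s : Set ℝ} (hs : Convex ℝ s) :
    ConcaveOn ℝ s fun t => (t - a) / c :=
  ⟨hs, fun x _ y _ u v _ _ huv => le_of_eq (by
    simp only [smul_eq_mul]
    linear_combination (-a / c) * huv)⟩

theorem concaveOn_const_mul (c : ℝ) {s : Set ℝ} (hs : Convex ℝ s) :
    ConcaveOn ℝ s fun t => c * t :=
  (LinearMap.mul ℝ ℝ c).concaveOn hs

theorem integral_eq_one_sub_gini_div_two (f : ℝ → ℝ) :
    ∫ t in (0:ℝ)..1, f t = (1 - Gini f) / 2 := by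
  unfold Gini
  ring

theorem continuous_laMinus (a : ℝ) : Continuous (laMinus a) := by
  unfold laMinus
  fun_prop

theorem integral_laMinus {a : ℝ} (ha₀ : 0 ≤ a) (ha₁ : a ≤ 1) :
    ∫ t in (0:ℝ)..1, laMinus a t = (1 - a) / 2 := by
  rcases ha₁.eq_or_lt with rfl | ha₁
  · simp [laMinus]
  have hI := (continuous_laMinus a).intervalIntegrable (μ := volume)
  have h₁ : ∫ t in (0:ℝ)..a, laMinus a t = 0 := by
    refine (integral_congr fun t ht => ?_).trans integral_zero
    rw [uIcc_of_le ha₀] at ht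
    exact max_eq_left (div_nonpos_of_nonpos_of_nonneg (by linarith [ht.2]) (by linarith))
  have h₂ : ∫ t in a..1, laMinus a t = ∫ t in a..1, (t - a) / (1 - a) := by
    refine integral_congr fun t ht => ?_
    rw [uIcc_of_le ha₁.le] at ht
    exact max_eq_right (div_nonneg (by linarith [ht.1]) (by linarith))
  rw [← integral_add_adjacent_intervals (hI 0 a) (hI a 1), h₁, h₂, intervalIntegral.integral_div,
    integral_sub intervalIntegrable_id intervalIntegrable_const, integral_id,
    intervalIntegral.integral_const, smul_eq_mul]
  field_simp
  ring

theorem lbPlus_ae_eq (b : ℝ) : lbPlus b =ᵐ[volume] fun t => (1 - b) * t :=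
  (measure_eq_zero_iff_ae_notMem.1 (measure_singleton 1)).mono fun t ht => by
    simp [lbPlus, mem_singleton_iff.not.1 ht]

theorem intervalIntegrable_lbPlus (b u v : ℝ) : IntervalIntegrable (lbPlus b) volume u v :=
  ((continuous_const_mul (1 - b)).intervalIntegrable u v).congr_ae
    (ae_restrict_of_ae (lbPlus_ae_eq b).symm)

theorem integral_lbPlus (b u v : ℝ) :
    ∫ t in u..v, lbPlus b t = ∫ t in u..v, (1 - b) * t :=
  integral_congr_ae ((lbPlus_ae_eq b).mono fun _ h _ => h)

theorem integral_lbPlus_zero_one (b : ℝ) : ∫ t in (0:ℝ)..1, lbPlus b t = (1 - b) / 2 := by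
  rw [integral_lbPlus, intervalIntegral.integral_const_mul, integral_id]
  ring

namespace MemLorenz

variable {ℓ : ℝ → ℝ}

theorem nonneg (hℓ : MemLorenz ℓ) {t : ℝ} (ht : t ∈ Icc (0:ℝ) 1) : 0 ≤ ℓ t := (hℓ.2.1 t ht).1

theorem apply_le_self (hℓ : MemLorenz ℓ) {t : ℝ} (ht : t ∈ Icc (0:ℝ) 1) : ℓ t ≤ t := by
  have := hℓ.1.2 (left_mem_Icc.2 zero_le_one) (right_mem_Icc.2 zero_le_one)
    (sub_nonneg.2 ht.2) ht.1 (sub_add_cancel 1 t)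
  simp only [smul_eq_mul, mul_zero, mul_one, zero_add, hℓ.2.2.1, hℓ.2.2.2] at this
  exact this

theorem monotoneOn (hℓ : MemLorenz ℓ) : MonotoneOn ℓ (Icc 0 1) := by
  intro x hx y hy hxy
  rcases hx.1.eq_or_lt with rfl | hx0
  · rw [hℓ.2.2.1]
    exact hℓ.nonneg hy
  · exact hℓ.1.le_right_of_left_le'' (left_mem_Icc.2 zero_le_one) hy hx0 hxy
      (by rw [hℓ.2.2.1]; exact hℓ.nonneg hx)

theorem intervalIntegrable (hℓ : MemLorenz ℓ) : IntervalIntegrable ℓ volume 0 1 :=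
  MonotoneOn.intervalIntegrable (by rw [uIcc_of_le zero_le_one]; exact hℓ.monotoneOn)

theorem gini_nonneg (hℓ : MemLorenz ℓ) : 0 ≤ Gini ℓ := by
  have := integral_mono_on zero_le_one hℓ.intervalIntegrable intervalIntegrable_id
    fun t ht => hℓ.apply_le_self ht
  rw [integral_eq_one_sub_gini_div_two, integral_id] at this
  linarith

theorem gini_le_one (hℓ : MemLorenz ℓ) : Gini ℓ ≤ 1 := by
  have := integral_nonneg (μ := volume) zero_le_one fun t ht => hℓ.nonneg ht
  rw [integral_eq_one_sub_gini_div_two] at this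
  linarith

theorem integral_le_integral_lbPlus {m : ℝ → ℝ} (hm : MemLorenz m) {t : ℝ}
    (ht : t ∈ Icc (0:ℝ) 1) : ∫ s in (0:ℝ)..t, m s ≤ ∫ s in (0:ℝ)..t, lbPlus (Gini m) s := by
  rw [integral_lbPlus]
  refine integral_le_integral_of_le_or_le ht.1 ht.2 hm.intervalIntegrable
    ((continuous_const_mul _).intervalIntegrable 0 1) ?_ ?_
  · rw [integral_eq_one_sub_gini_div_two, intervalIntegral.integral_const_mul, integral_id]
    ring
  rcases hm.1.le_or_le_of_concaveOn (concaveOn_const_mul (1 - Gini m) (convex_Icc 0 1))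
    (left_mem_Icc.2 zero_le_one) ht (by simp [hm.2.2.1]) with h | h
  · exact .inl fun x hx => h x (by rwa [uIcc_of_le ht.1])
  · refine .inr fun x hx => h x ⟨ht.1.trans hx.1, hx.2⟩ ?_
    rw [uIcc_of_le (ht.1.trans hx.1)]
    exact ⟨ht.1, hx.1⟩

theorem integral_laMinus_le_integral (hℓ : MemLorenz ℓ) {t : ℝ} (ht : t ∈ Icc (0:ℝ) 1) :
    ∫ s in (0:ℝ)..t, laMinus (Gini ℓ) s ≤ ∫ s in (0:ℝ)..t, ℓ s := by
  refine integral_le_integral_of_le_or_le ht.1 ht.2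
    ((continuous_laMinus _).intervalIntegrable 0 1) hℓ.intervalIntegrable ?_ ?_
  · rw [integral_laMinus hℓ.gini_nonneg hℓ.gini_le_one, integral_eq_one_sub_gini_div_two]
  rcases hℓ.gini_le_one.eq_or_lt with ha | ha
  · refine .inl fun x hx => ?_
    simp only [laMinus, ha, sub_self, div_zero, max_self]
    exact hℓ.nonneg ⟨hx.1, hx.2.trans ht.2⟩
  rcases hℓ.1.le_or_le_of_concaveOn (concaveOn_sub_div (Gini ℓ) (1 - Gini ℓ) (convex_Icc 0 1))
    (right_mem_Icc.2 zero_le_one) ht (by rw [hℓ.2.2.2, div_self (by linarith)]) with h | h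
  · refine .inr fun x hx => le_max_of_le_right (h x ?_)
    rwa [uIcc_of_ge ht.2]
  · refine .inl fun x hx =>
      max_le (hℓ.nonneg ⟨hx.1, hx.2.trans ht.2⟩) (h x ⟨hx.1, hx.2.trans ht.2⟩ ?_)
    rw [uIcc_of_ge (hx.2.trans ht.2)]
    exact ⟨hx.2, ht.2⟩

end MemLorenz

/-- If `ℓ ∈ L_a`, `m ∈ L_b` and for some `t₀ ∈ (0,1)` we have `ℓ ≤ m` on
`[0,t₀]` and `ℓ ≥ m` on `[t₀,1]`, then
`2∫₀¹|ℓ - m| ≤ 2∫₀¹|ℓ_a⁻ - ℓ_b⁺|`. -/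
theorem one_sign_switch_dist_le (ℓ m : ℝ → ℝ) (a b t₀ : ℝ)
    (hℓ : MemLorenz ℓ) (hm : MemLorenz m)
    (ha : Gini ℓ = a) (hb : Gini m = b)
    (ht₀ : t₀ ∈ Ioo (0:ℝ) 1)
    (hle : ∀ t ∈ Icc (0:ℝ) t₀, ℓ t ≤ m t)
    (hge : ∀ t ∈ Icc t₀ (1:ℝ), m t ≤ ℓ t) :
    2 * ∫ t in (0:ℝ)..1, |ℓ t - m t| ≤
      2 * ∫ t in (0:ℝ)..1, |laMinus a t - lbPlus b t| := by
  subst ha hb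
  have ht : t₀ ∈ Icc (0:ℝ) 1 := Ioo_subset_Icc_self ht₀
  have hextremal := integral_sub_sub_two_mul_le_integral_abs_sub ht.1 ht.2
    ((continuous_laMinus (Gini ℓ)).intervalIntegrable 0 1) (intervalIntegrable_lbPlus (Gini m) 0 1)
  rw [integral_laMinus hℓ.gini_nonneg hℓ.gini_le_one, integral_lbPlus_zero_one] at hextremal
  have hpartial_m := hm.integral_le_integral_lbPlus ht
  have hpartial_ℓ := hℓ.integral_laMinus_le_integral ht
  rw [integral_abs_sub_eq_of_le_of_le ht.1 ht.2 hℓ.intervalIntegrable hm.intervalIntegrable hle hge,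
    integral_eq_one_sub_gini_div_two ℓ, integral_eq_one_sub_gini_div_two m]
  linarith
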